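/- For every α ∈ (0,1), every n ≥ 1 and every configuration w ∈ W_{2n}, one has φ_α(w) = (1+n)^α if and only if E(w) = 0, i.e., if and only if w is one of the two perfectly alternating configurations (12)^n or (21)^n. -/

import Mathlib

open scoped BigOperators ENNReal

attribute [local instance] Classical.propDecidable

namespace Cooling

/-- Words over the alphabet `{1,2}`, modeled as lists of booleans:
`true` encodes the letter `1`, `false` encodes the letter `2`. -/
abbrev Word := List Bool

/-- `w` is a configuration of length `2*n`: a word of length `2*n` with as many
occurrences of the letter `1` (`true`) as of the letter `2` (`false`). -/
def IsConfig (n : ℕ) (w : Word) : Prop :=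
  w.length = 2 * n ∧ w.count true = n

/-- The (finite) set `W_{2n}` of all configurations of length `2*n`. -/
def configSet (n : ℕ) : Finset Word :=
  ((Finset.univ : Finset (Fin (2 * n) → Bool)).image List.ofFn).filter
    (fun w => w.count true = n)

/-- The number `E(w)` of mismatches of `w`: positions `i` with `w_i = w_{i+1}`. -/
def mismatches (w : Word) : ℕ :=
  (w.zip w.tail).countP (fun p => p.1 == p.2)

/-- The number `F(w)` of flips performable on `w`: positions `i` with `w_i ≠ w_{i+1}`. -/
def flipCount (w : Word) : ℕ :=
  (w.zip w.tail).countP (fun p => p.1 != p.2)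

/-- The word `w^{(i)}` obtained from `w` by exchanging the letters at positions
`i` and `i+1` (0-indexed). -/
def flip (w : Word) (i : ℕ) : Word :=
  (w.set i (w.getD (i + 1) true)).set (i + 1) (w.getD i true)

/-- A flip is permitted at position `i` if both positions `i` and `i+1` exist and the
corresponding letters are different. -/
def CanFlip (w : Word) (i : ℕ) : Prop :=
  i + 1 < w.length ∧ w.getD i true ≠ w.getD (i + 1) true

/-- The set of positions at which a flip is allowed in the cooling process:
positions of permitted flips which do not increase the number of mismatches. -/
noncomputable def allowedFlips (w : Word) : Finset ℕ :=
  (Finset.range w.length).filter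
    (fun i => CanFlip w i ∧ mismatches (flip w i) ≤ mismatches w)

/-- One step of the cooling process: if `E(w) = 0`, stay at `w`; otherwise, perform
a flip chosen uniformly at random among the flips which do not increase the number
of mismatches. -/
noncomputable def coolStep (w : Word) : PMF Word :=
  if h : mismatches w ≠ 0 ∧ (allowedFlips w).Nonempty then
    (PMF.uniformOfFinset (allowedFlips w) h.2).map (flip w)
  else
    PMF.pure w

/-- The distribution of the cooling process at time `t`, started from `w`. -/
noncomputable def coolDist (w : Word) : ℕ → PMF Word
  | 0 => PMF.pure w
  | t + 1 => (coolDist w t).bind coolStep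

/-- The expected convergence time `E[T | w₀ = w]` of the cooling process started at `w`,
where `T = min {t ≥ 0 : E(w_t) = 0}`.  Since mismatch-free configurations are absorbing,
`E[T] = ∑_{t ≥ 0} P(T > t) = ∑_{t ≥ 0} P(E(w_t) ≠ 0)`. -/
noncomputable def expConvTime (w : Word) : ℝ≥0∞ :=
  ∑' t : ℕ, (coolDist w t).toOuterMeasure {v | mismatches v ≠ 0}

/-- The factor of `w` starting at position `s` (0-indexed) of length `l`. -/
def factor (w : Word) (s l : ℕ) : Word := (w.drop s).take l

/-- The height `|p|₁ - |p|₂` of the length-`s` prefix `p` of `w`. -/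
def height (w : Word) (s : ℕ) : ℤ :=
  ((w.take s).count true : ℤ) - (w.take s).count false

/-- The occurrence `(s, l)` is a positive Dyck factor of `w`. -/
def IsPosDyckAt (w : Word) (s l : ℕ) : Prop :=
  0 < l ∧ s + l ≤ w.length ∧
  (factor w s l).count true = (factor w s l).count false ∧
  (∀ i ≤ l, ((factor w s l).take i).count false ≤ ((factor w s l).take i).count true) ∧
  0 ≤ height w s

/-- The occurrence `(s, l)` is a negative Dyck factor of `w`. -/
def IsNegDyckAt (w : Word) (s l : ℕ) : Prop :=
  0 < l ∧ s + l ≤ w.length ∧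
  (factor w s l).count true = (factor w s l).count false ∧
  (∀ i ≤ l, ((factor w s l).take i).count true ≤ ((factor w s l).take i).count false) ∧
  height w s ≤ 0

/-- The occurrence `(s, l)` is a Dyck factor of `w` (positive or negative). -/
def IsDyckAt (w : Word) (s l : ℕ) : Prop :=
  IsPosDyckAt w s l ∨ IsNegDyckAt w s l

/-- The occurrence `(s, l)` is a maximal Dyck factor of `w`: no Dyck factor of `w`
with the same height contains it (other than itself). -/
def IsMaxDyckAt (w : Word) (s l : ℕ) : Prop :=
  IsDyckAt w s l ∧
  ∀ s' l', IsDyckAt w s' l' → height w s' = height w s → s' ≤ s → s + l ≤ s' + l' →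
    s' = s ∧ l' = l

/-- The set `DF(w)` of (occurrences of) maximal Dyck factors of `w`,
encoded as pairs (starting position, length). -/
noncomputable def DF (w : Word) : Finset (ℕ × ℕ) :=
  ((Finset.range (w.length + 1)) ×ˢ (Finset.range (w.length + 1))).filter
    (fun sl => IsMaxDyckAt w sl.1 sl.2)

/-- The variant `φ_α(w) = ∑_{v ∈ DF(w)} (1 + |v|₁)^α`. -/
noncomputable def phi (α : ℝ) (w : Word) : ℝ :=
  ∑ sl ∈ DF w, (1 + ((factor w sl.1 sl.2).count true : ℝ)) ^ α

/-- The volume `V(w) = (1/2) ∑_{k=1}^{|w|} |h_{k-1}(w) + h_k(w)|`: the area between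
the broken-line representation of `w` and the horizontal axis. -/
noncomputable def volume (w : Word) : ℝ :=
  (1 / 2) * ∑ k ∈ Finset.range w.length, |((height w k + height w (k + 1) : ℤ) : ℝ)|

/-!
Read a word as the lattice path of its heights. Every step of the path lies in an excursion
above or below the axis, i.e. in a Dyck factor, and hence in a maximal one; so the maximal Dyck
factors cover the word and together contain at least `n` letters `1`. Since `t ↦ t ^ α` is
subadditive and strictly increasing, `φ_α(w) > (1 + n) ^ α` as soon as `w` has two maximal Dyck
factors. If there were only one, it would be the whole word, keeping the path on one side of the
axis; two equal consecutive letters then produce a step at height `≥ 1` (or `≤ -1`) on that side,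
whose maximal Dyck factor starts off the axis. Conversely, the path of an alternating word
oscillates between `0` and `±1`, and the whole word is its only maximal Dyck factor.
-/

open Finset

theorem exists_excursion_around {f : ℕ → ℤ} (hf : ∀ k, |f (k + 1) - f k| ≤ 1) {c : ℤ} {j N : ℕ}
    (hjN : j < N) (h0 : f 0 ≤ c) (hN : f N ≤ c) (hj : c ≤ f j) (hj1 : c ≤ f (j + 1)) :
    ∃ s e, s ≤ j ∧ j < e ∧ e ≤ N ∧ f s = c ∧ f e = c ∧ ∀ k, s ≤ k → k ≤ e → c ≤ f k := by
  have hstep := fun k => abs_sub_le_iff.mp (hf k)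
  obtain ⟨s, hs_le, hs, hs_gt⟩ : ∃ s ≤ j, f s ≤ c ∧ ∀ k, s < k → k ≤ j → c < f k :=
    ⟨_, Nat.findGreatest_le j, Nat.findGreatest_spec (P := fun k => f k ≤ c) (Nat.zero_le j) h0,
      fun k h1 h2 => not_le.mp (Nat.findGreatest_is_greatest h1 h2)⟩
  have hex : ∃ e, j < e ∧ f e ≤ c := ⟨N, hjN, hN⟩
  obtain ⟨e, ⟨he_gt, he⟩, he_N, he_lt⟩ :
      ∃ e, (j < e ∧ f e ≤ c) ∧ e ≤ N ∧ ∀ k, j < k → k < e → c < f k :=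
    ⟨_, Nat.find_spec hex, Nat.find_min' hex ⟨hjN, hN⟩,
      fun k h1 h2 => not_le.mp fun h => Nat.find_min hex h2 ⟨h1, h⟩⟩
  have hs_eq : f s = c := by
    rcases hs_le.lt_or_eq with h | h
    · have := hs_gt (s + 1) (by omega) h
      have := hstep s
      omega
    · subst h; omega
  have he_eq : f e = c := by
    obtain ⟨e', rfl⟩ : ∃ e', e = e' + 1 := ⟨e - 1, by omega⟩
    rcases (show j ≤ e' by omega).lt_or_eq with h | rfl
    · have := he_lt e' h (by omega)
      have := hstep e'
      omega
    · omega
  refine ⟨s, e, hs_le, he_gt, he_N, hs_eq, he_eq, fun k hk1 hk2 => ?_⟩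
  rcases hk1.lt_or_eq with hk1 | rfl
  · rcases le_or_gt k j with h | h
    · exact (hs_gt k hk1 h).le
    · rcases hk2.lt_or_eq with hk2 | rfl
      · exact (he_lt k h hk2).le
      · exact he_eq.ge
  · exact hs_eq.ge

theorem rpow_sum_le_sum_rpow {ι : Type*} (s : Finset ι) {f : ι → ℝ} (hf : ∀ i ∈ s, 0 ≤ f i)
    {α : ℝ} (hα₀ : 0 < α) (hα₁ : α ≤ 1) : (∑ i ∈ s, f i) ^ α ≤ ∑ i ∈ s, f i ^ α :=
  le_sum_of_subadditive_on_pred (· ^ α) (0 ≤ ·) (Real.zero_rpow hα₀.ne').le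
    (fun _ _ hx hy => Real.rpow_add_le_add_rpow hx hy hα₀.le hα₁) (fun _ _ => add_nonneg) f hf

theorem one_add_sum_rpow_lt {ι : Type*} {s : Finset ι} (hs : 2 ≤ #s) {g : ι → ℝ}
    (hg : ∀ i ∈ s, 0 ≤ g i) {α : ℝ} (hα₀ : 0 < α) (hα₁ : α ≤ 1) :
    (1 + ∑ i ∈ s, g i) ^ α < ∑ i ∈ s, (1 + g i) ^ α := by
  have hsum : 0 ≤ ∑ i ∈ s, g i := sum_nonneg hg
  have hcard : (2 : ℝ) ≤ #s := by exact_mod_cast hs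
  calc (1 + ∑ i ∈ s, g i) ^ α < (∑ i ∈ s, (1 + g i)) ^ α := by
        refine Real.rpow_lt_rpow (by positivity) ?_ hα₀
        rw [sum_add_distrib, sum_const, nsmul_one]
        linarith
    _ ≤ ∑ i ∈ s, (1 + g i) ^ α :=
        rpow_sum_le_sum_rpow s (fun i hi => by linarith [hg i hi]) hα₀ hα₁

@[simp] theorem height_zero (w : Word) : height w 0 = 0 := by simp [height]

theorem height_succ_of_lt {w : Word} {k : ℕ} (hk : k < w.length) :
    height w (k + 1) = height w k + if w[k] then 1 else -1 := by
  rw [height, height, List.take_add_one, List.getElem?_eq_getElem hk, Option.toList_some,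
    List.count_append, List.count_append]
  cases w[k] <;> grind

theorem height_of_length_le {w : Word} {k : ℕ} (hk : w.length ≤ k) :
    height w k = height w w.length := by
  simp [height, List.take_of_length_le hk]

theorem abs_height_succ_sub_le (w : Word) (k : ℕ) : |height w (k + 1) - height w k| ≤ 1 := by
  rcases lt_or_ge k w.length with hk | hk
  · rw [height_succ_of_lt hk]; split <;> simp
  · rw [height_of_length_le hk, height_of_length_le (by omega : w.length ≤ k + 1)]; simp

theorem IsConfig.height_length {n : ℕ} {w : Word} (hw : IsConfig n w) :
    height w w.length = 0 := by
  obtain ⟨hlen, hcount⟩ := hw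
  have := List.count_true_add_count_false w
  simp only [height, List.take_length]
  omega

theorem height_add (w : Word) (s i : ℕ) :
    height w (s + i) =
      height w s + (((w.drop s).take i).count true - ((w.drop s).take i).count false : ℤ) := by
  simp only [height, List.take_add, List.count_append]
  push_cast
  ring

theorem take_factor {w : Word} {s l i : ℕ} (hi : i ≤ l) :
    (factor w s l).take i = (w.drop s).take i := by
  rw [factor, List.take_take, min_eq_left hi]

theorem isPosDyckAt_iff {w : Word} {s l : ℕ} :
    IsPosDyckAt w s l ↔ 0 < l ∧ s + l ≤ w.length ∧ height w (s + l) = height w s ∧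
      (∀ i ≤ l, height w s ≤ height w (s + i)) ∧ 0 ≤ height w s := by
  unfold IsPosDyckAt
  refine and_congr_right' <| and_congr_right' <| and_congr (by rw [height_add, factor]; omega) <|
    and_congr_left' <| forall₂_congr fun i hi => ?_
  rw [take_factor hi, height_add]
  omega

theorem isNegDyckAt_iff {w : Word} {s l : ℕ} :
    IsNegDyckAt w s l ↔ 0 < l ∧ s + l ≤ w.length ∧ height w (s + l) = height w s ∧
      (∀ i ≤ l, height w (s + i) ≤ height w s) ∧ height w s ≤ 0 := by
  unfold IsNegDyckAt
  refine and_congr_right' <| and_congr_right' <| and_congr (by rw [height_add, factor]; omega) <|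
    and_congr_left' <| forall₂_congr fun i hi => ?_
  rw [take_factor hi, height_add]
  omega

theorem IsDyckAt.bounds {w : Word} {s l : ℕ} (h : IsDyckAt w s l) : 0 < l ∧ s + l ≤ w.length := by
  rcases h with h | h <;> exact ⟨h.1, h.2.1⟩

theorem mem_DF {w : Word} {d : ℕ × ℕ} : d ∈ DF w ↔ IsMaxDyckAt w d.1 d.2 := by
  simp only [DF, mem_filter, mem_product, mem_range, and_iff_right_iff_imp]
  intro h
  have := h.1.bounds
  omega

theorem count_true_take (w : Word) (m : ℕ) :
    (w.take m).count true = #{k ∈ range m | w.getD k false} := by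
  induction m with
  | zero => simp
  | succ m ih =>
    rw [List.take_add_one, List.count_append, ih, range_add_one, filter_insert]
    rcases lt_or_ge m w.length with hm | hm
    · cases h : w[m] <;> simp [List.getElem?_eq_getElem hm, h]
    · simp [List.getElem?_eq_none hm]

theorem count_true_factor (w : Word) (s l : ℕ) :
    (factor w s l).count true = #{k ∈ Ico s (s + l) | w.getD k false} := by
  have h := count_true_take w (s + l)
  rw [List.take_add, List.count_append, count_true_take w s, card_filter, card_filter,
    ← sum_range_add_sum_Ico _ (Nat.le_add_right s l)] at h
  rw [card_filter]
  exact Nat.add_left_cancel h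

theorem exists_isPosDyckAt_covering {w : Word} (hw : height w w.length = 0) {j : ℕ}
    (hj : j < w.length) {c : ℤ} (hc : 0 ≤ c) (hcj : c ≤ height w j) (hcj1 : c ≤ height w (j + 1)) :
    ∃ s l, IsPosDyckAt w s l ∧ s ≤ j ∧ j < s + l ∧ height w s = c := by
  obtain ⟨s, e, hsj, hje, heN, hs, he, hmin⟩ := exists_excursion_around
    (abs_height_succ_sub_le w) hj (by simpa using hc) (hw ▸ hc) hcj hcj1
  refine ⟨s, e - s, isPosDyckAt_iff.mpr ⟨by omega, by omega, ?_, fun i hi => ?_, hs ▸ hc⟩,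
    hsj, by omega, hs⟩
  · rw [Nat.add_sub_cancel' (by omega), hs, he]
  · exact hs ▸ hmin _ (by omega) (by omega)

theorem exists_isNegDyckAt_covering {w : Word} (hw : height w w.length = 0) {j : ℕ}
    (hj : j < w.length) {c : ℤ} (hc : c ≤ 0) (hcj : height w j ≤ c) (hcj1 : height w (j + 1) ≤ c) :
    ∃ s l, IsNegDyckAt w s l ∧ s ≤ j ∧ j < s + l ∧ height w s = c := by
  obtain ⟨s, e, hsj, hje, heN, hs, he, hmin⟩ := exists_excursion_around (f := fun k => -height w k)
    (fun k => by rw [neg_sub_neg, abs_sub_comm]; exact abs_height_succ_sub_le w k) hj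
    (c := -c) (by simpa using hc) (by simpa [hw] using hc) (neg_le_neg hcj) (neg_le_neg hcj1)
  simp only [neg_inj, neg_le_neg_iff] at hs he hmin
  refine ⟨s, e - s, isNegDyckAt_iff.mpr ⟨by omega, by omega, ?_, fun i hi => ?_, hs ▸ hc⟩,
    hsj, by omega, hs⟩
  · rw [Nat.add_sub_cancel' (by omega), hs, he]
  · exact hs ▸ hmin _ (by omega) (by omega)

theorem exists_isDyckAt_covering {w : Word} (hw : height w w.length = 0) {j : ℕ}
    (hj : j < w.length) : ∃ s l, IsDyckAt w s l ∧ s ≤ j ∧ j < s + l := by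
  have hstep := height_succ_of_lt hj
  by_cases hpos : 0 ≤ height w j ∧ 0 ≤ height w (j + 1)
  · obtain ⟨s, l, h, hs, hl, -⟩ := exists_isPosDyckAt_covering hw hj le_rfl hpos.1 hpos.2
    exact ⟨s, l, .inl h, hs, hl⟩
  · obtain ⟨s, l, h, hs, hl, -⟩ := exists_isNegDyckAt_covering hw hj le_rfl
      (by split at hstep <;> omega) (by split at hstep <;> omega)
    exact ⟨s, l, .inr h, hs, hl⟩

theorem exists_mem_DF_of_isDyckAt {w : Word} {s l : ℕ} (h : IsDyckAt w s l) :
    ∃ d ∈ DF w, d.1 ≤ s ∧ s + l ≤ d.1 + d.2 ∧ height w d.1 = height w s := by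
  let S := (range (w.length + 1) ×ˢ range (w.length + 1)).filter fun d =>
    IsDyckAt w d.1 d.2 ∧ height w d.1 = height w s ∧ d.1 ≤ s ∧ s + l ≤ d.1 + d.2
  have mem_S {d : ℕ × ℕ} (hd : IsDyckAt w d.1 d.2) (hh : height w d.1 = height w s)
      (hs : d.1 ≤ s) (hl : s + l ≤ d.1 + d.2) : d ∈ S := by
    have := hd.bounds
    simp only [S, mem_filter, mem_product, mem_range]
    exact ⟨⟨by omega, by omega⟩, hd, hh, hs, hl⟩
  -- a longest candidate is maximal, since any Dyck factor containing it is again a candidate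
  obtain ⟨d, hdS, hlongest⟩ := S.exists_max_image Prod.snd ⟨(s, l), mem_S h rfl le_rfl le_rfl⟩
  obtain ⟨hd, hh, hs, hl⟩ := (mem_filter.mp hdS).2
  refine ⟨d, mem_DF.mpr ⟨hd, fun s' l' h' hh' hs' hl' => ?_⟩, hs, hl, hh⟩
  have := hlongest (s', l') (mem_S h' (hh'.trans hh) (by omega) (by omega))
  omega

theorem exists_mem_DF_covering {w : Word} (hw : height w w.length = 0) {j : ℕ}
    (hj : j < w.length) : ∃ d ∈ DF w, d.1 ≤ j ∧ j < d.1 + d.2 := by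
  obtain ⟨s, l, h, hs, hl⟩ := exists_isDyckAt_covering hw hj
  obtain ⟨d, hd, hds, hdl, -⟩ := exists_mem_DF_of_isDyckAt h
  exact ⟨d, hd, by omega, by omega⟩

theorem le_sum_count_true_DF {n : ℕ} {w : Word} (hw : IsConfig n w) :
    n ≤ ∑ d ∈ DF w, (factor w d.1 d.2).count true := by
  have hcover : {k ∈ range w.length | w.getD k false} ⊆
      (DF w).biUnion fun d => {k ∈ Ico d.1 (d.1 + d.2) | w.getD k false} := by
    intro k hk
    obtain ⟨hk, hk1⟩ := mem_filter.mp hk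
    obtain ⟨d, hd, h1, h2⟩ := exists_mem_DF_covering hw.height_length (mem_range.mp hk)
    exact mem_biUnion.mpr ⟨d, hd, mem_filter.mpr ⟨mem_Ico.mpr ⟨h1, h2⟩, hk1⟩⟩
  calc n = #{k ∈ range w.length | w.getD k false} := by
        rw [← count_true_take, List.take_length, hw.2]
    _ ≤ _ := card_le_card hcover
    _ ≤ _ := card_biUnion_le
    _ = _ := by simp only [count_true_factor]

theorem mismatches_eq_zero_iff {w : Word} :
    mismatches w = 0 ↔ ∀ i (hi : i + 1 < w.length), w[i] ≠ w[i + 1] := by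
  simp only [mismatches, List.countP_eq_zero, List.mem_iff_getElem, List.length_zip,
    List.length_tail, List.getElem_zip, List.getElem_tail, beq_iff_eq]
  constructor
  · intro h i hi
    exact h _ ⟨i, by omega, rfl⟩
  · rintro h _ ⟨i, hi, rfl⟩
    exact h i (by omega)

theorem two_le_card_DF {n : ℕ} {w : Word} (hw : IsConfig n w) (hE : mismatches w ≠ 0) :
    2 ≤ #(DF w) := by
  obtain ⟨i, hi, hii⟩ : ∃ i, ∃ hi : i + 1 < w.length, w[i] = w[i + 1] := by
    simpa [mismatches_eq_zero_iff] using hE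
  by_contra! hcard
  have hw0 := hw.height_length
  have huniq := card_le_one.mp (Nat.le_of_lt_succ hcard)
  obtain ⟨d, hd, hd0, -⟩ := exists_mem_DF_covering hw0 (show 0 < w.length by omega)
  obtain ⟨d', hd', -, hdlen⟩ := exists_mem_DF_covering hw0 (show w.length - 1 < w.length by omega)
  rw [huniq d' hd' d hd] at hdlen
  have hd1 : d.1 = 0 := by omega
  have hlevel {s l : ℕ} (h : IsDyckAt w s l) : height w s = 0 := by
    obtain ⟨d', hd', -, -, hh⟩ := exists_mem_DF_of_isDyckAt h
    rw [← hh, huniq d' hd' d hd, hd1, height_zero]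
  -- the two equal steps at `i` and `i + 1` climb away from height `0` on the side of `d`
  have hstep₀ := height_succ_of_lt (show i < w.length by omega)
  have hstep₁ := height_succ_of_lt hi
  rw [← hii] at hstep₁
  rcases (mem_DF.mp hd).1 with hpos | hneg
  · obtain ⟨-, -, -, hmin, -⟩ := isPosDyckAt_iff.mp hpos
    have hnn (k : ℕ) (hk : k ≤ w.length) : 0 ≤ height w k := by
      simpa [hd1] using hmin k (by omega)
    have := hnn i (by omega)
    have := hnn (i + 1 + 1) (by omega)
    obtain ⟨j, hj, h1, h2⟩ : ∃ j < w.length, 1 ≤ height w j ∧ 1 ≤ height w (j + 1) := by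
      cases hb : w[i] <;> simp only [hb, Bool.false_eq_true, ↓reduceIte] at hstep₀ hstep₁
      · exact ⟨i, by omega, by omega, by omega⟩
      · exact ⟨i + 1, hi, by omega, by omega⟩
    obtain ⟨s, l, h, -, -, hs⟩ := exists_isPosDyckAt_covering hw0 hj zero_le_one h1 h2
    have := hlevel (.inl h)
    omega
  · obtain ⟨-, -, -, hmax, -⟩ := isNegDyckAt_iff.mp hneg
    have hnp (k : ℕ) (hk : k ≤ w.length) : height w k ≤ 0 := by
      simpa [hd1] using hmax k (by omega)
    have := hnp i (by omega)
    have := hnp (i + 1 + 1) (by omega)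
    obtain ⟨j, hj, h1, h2⟩ : ∃ j < w.length, height w j ≤ -1 ∧ height w (j + 1) ≤ -1 := by
      cases hb : w[i] <;> simp only [hb, Bool.false_eq_true, ↓reduceIte] at hstep₀ hstep₁
      · exact ⟨i + 1, hi, by omega, by omega⟩
      · exact ⟨i, by omega, by omega, by omega⟩
    obtain ⟨s, l, h, -, -, hs⟩ :=
      exists_isNegDyckAt_covering hw0 hj (by norm_num) h1 h2
    have := hlevel (.inr h)
    omega

theorem one_add_rpow_lt_phi {α : ℝ} (hα : α ∈ Set.Ioo (0 : ℝ) 1) {n : ℕ} {w : Word}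
    (hw : IsConfig n w) (hE : mismatches w ≠ 0) : (1 + (n : ℝ)) ^ α < phi α w := by
  have hn : (n : ℝ) ≤ ∑ d ∈ DF w, ((factor w d.1 d.2).count true : ℝ) := by
    exact_mod_cast le_sum_count_true_DF hw
  calc (1 + (n : ℝ)) ^ α ≤ (1 + ∑ d ∈ DF w, ((factor w d.1 d.2).count true : ℝ)) ^ α :=
        Real.rpow_le_rpow (by positivity) (by linarith) hα.1.le
    _ < phi α w :=
        one_add_sum_rpow_lt (two_le_card_DF hw hE) (fun _ _ => by positivity) hα.1 hα.2.le

def alternating (b : Bool) (m : ℕ) : Word := (List.replicate m [b, !b]).flatten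

theorem alternating_succ (b : Bool) (m : ℕ) :
    alternating b (m + 1) = b :: (!b) :: alternating b m := by
  simp [alternating, List.replicate_succ]

@[simp] theorem length_alternating (b : Bool) (m : ℕ) : (alternating b m).length = 2 * m := by
  induction m with
  | zero => rfl
  | succ m ih => rw [alternating_succ, List.length_cons, List.length_cons, ih]; ring

theorem getElem_alternating (b : Bool) (m : ℕ) {k : ℕ} (hk : k < (alternating b m).length) :
    (alternating b m)[k] = if Even k then b else !b := by
  induction m generalizing k with
  | zero => simp at hk
  | succ m ih =>
    simp only [alternating_succ]
    match k, hk with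
    | 0, _ => simp
    | 1, _ => simp
    | k + 2, hk => simp [ih, Nat.even_add_one]

theorem mismatches_alternating (b : Bool) (m : ℕ) : mismatches (alternating b m) = 0 :=
  mismatches_eq_zero_iff.mpr fun i hi => by
    rw [getElem_alternating, getElem_alternating]
    by_cases h : Even i <;> simp [h, Nat.even_add_one]

theorem exists_eq_alternating_of_mismatches_eq_zero {w : Word} {m : ℕ} (hE : mismatches w = 0)
    (hlen : w.length = 2 * m) (hm : 0 < m) : ∃ b, w = alternating b m := by
  have hletter (k : ℕ) (hk : k < w.length) : w[k] = if Even k then w[0] else !w[0] := by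
    induction k with
    | zero => simp
    | succ k ih =>
      rw [Bool.eq_not_of_ne (mismatches_eq_zero_iff.mp hE k hk).symm, ih (by omega)]
      by_cases h : Even k <;> simp [h, Nat.even_add_one]
  exact ⟨w[0], List.ext_getElem (by simp [hlen]) fun k hk _ => by
    rw [hletter k hk, getElem_alternating]⟩

theorem height_alternating (b : Bool) (m : ℕ) {k : ℕ} (hk : k ≤ 2 * m) :
    height (alternating b m) k = if Even k then 0 else if b then 1 else -1 := by
  induction k with
  | zero => simp
  | succ k ih =>
    rw [height_succ_of_lt (by rw [length_alternating]; omega), ih (by omega), getElem_alternating]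
    by_cases h : Even k <;> cases b <;> simp [h, Nat.even_add_one]

theorem DF_alternating (b : Bool) {m : ℕ} (hm : 0 < m) :
    DF (alternating b m) = {(0, 2 * m)} := by
  have hh (k : ℕ) (hk : k ≤ 2 * m) := height_alternating b m hk
  have hlen := length_alternating b m
  generalize alternating b m = w at hh hlen ⊢
  -- an odd start sits at height `±1` and the next step returns to `0`, against the Dyck condition
  have hstart {s l : ℕ} (h : IsDyckAt w s l) : height w s = 0 := by
    obtain ⟨hl, hsl⟩ := h.bounds
    by_contra hne
    have hs : ¬Even s := fun hs => hne (by simp [hh s (by omega), hs])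
    have h1 : height w (s + 1) = 0 := by simp [hh (s + 1) (by omega), Nat.even_add_one, hs]
    have h2 : height w s = 1 ∨ height w s = -1 := by
      rw [hh s (by omega)]; cases b <;> simp [hs]
    rcases h with h | h
    · obtain ⟨-, -, -, hmin, hnn⟩ := isPosDyckAt_iff.mp h
      have := hmin 1 hl
      omega
    · obtain ⟨-, -, -, hmax, hnp⟩ := isNegDyckAt_iff.mp h
      have := hmax 1 hl
      omega
  have hwhole : IsDyckAt w 0 (2 * m) := by
    cases b
    · refine .inr (isNegDyckAt_iff.mpr ⟨by omega, by omega, ?_, fun i hi => ?_, by simp⟩)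
      · rw [zero_add, hh _ le_rfl, if_pos (even_two_mul m), height_zero]
      · rw [zero_add, hh i hi]; split <;> simp
    · refine .inl (isPosDyckAt_iff.mpr ⟨by omega, by omega, ?_, fun i hi => ?_, by simp⟩)
      · rw [zero_add, hh _ le_rfl, if_pos (even_two_mul m), height_zero]
      · rw [zero_add, hh i hi]; split <;> simp
  ext ⟨s, l⟩
  rw [mem_DF, mem_singleton, Prod.mk.injEq]
  constructor
  · intro h
    have := h.1.bounds
    obtain ⟨h1, h2⟩ :=
      h.2 0 (2 * m) hwhole (by rw [hstart h.1, height_zero]) (Nat.zero_le s) (by omega)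
    exact ⟨h1.symm, h2.symm⟩
  · rintro ⟨rfl, rfl⟩
    refine ⟨hwhole, fun s' l' h' _ _ _ => ?_⟩
    have := h'.bounds
    omega

theorem phi_alternating (α : ℝ) (b : Bool) {m : ℕ} (hm : 0 < m) :
    phi α (alternating b m) = (1 + ((alternating b m).count true : ℝ)) ^ α := by
  rw [phi, DF_alternating b hm, sum_singleton, ← length_alternating b m, factor, List.drop_zero,
    List.take_length]

/-- the lower bound `(1+n)^α` of the variant is attained exactly at the
mismatch-free configurations, which are exactly the two alternating words
`(12)^n` and `(21)^n`. -/
theorem phi_eq_min_iff (α : ℝ) (hα : α ∈ Set.Ioo (0 : ℝ) 1)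
    (n : ℕ) (hn : 1 ≤ n) (w : Word) (hw : IsConfig n w) :
    (phi α w = (1 + (n : ℝ)) ^ α ↔ mismatches w = 0) ∧
    (mismatches w = 0 ↔
      w = (List.replicate n [true, false]).flatten ∨
      w = (List.replicate n [false, true]).flatten) := by
  have halt : mismatches w = 0 ↔ ∃ b, w = alternating b n :=
    ⟨fun hE => exists_eq_alternating_of_mismatches_eq_zero hE hw.1 hn,
      by rintro ⟨b, rfl⟩; exact mismatches_alternating b n⟩
  refine ⟨⟨fun h => by_contra fun hE => (one_add_rpow_lt_phi hα hw hE).ne' h, fun hE => ?_⟩,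
    halt.trans ?_⟩
  · obtain ⟨b, rfl⟩ := halt.mp hE
    rw [phi_alternating α b hn, hw.2]
  · rw [Bool.exists_bool]
    exact Or.comm

end Cooling
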